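/- Let n ≥ 1, let O ⊆ ℂ be open and connected, and let u : ℂ → ℂⁿ be twice continuously differentiable on O (regarding ℂ ≅ ℝ², with ∂₁, ∂₂ the partial derivatives in the real and imaginary coordinate directions). Assume on O: isotropy ⟨J ∂₁u, ∂₂u⟩ = 0 and Hamiltonian stationarity ⟨J u, ∂₁∂₁u + ∂₂∂₂u⟩ = 0. Let Z = { w ∈ O : ⟨J u(w), ∂₁u(w)⟩ = 0 and ⟨J u(w), ∂₂u(w)⟩ = 0 } be the set of Legendrian points. Then either Z = O, or every point of Z is an isolated point of Z. -/

import Mathlib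

/-- The standard complex structure `J x = i • x` on `ℂⁿ`. -/
noncomputable def Jc {n : ℕ} (x : EuclideanSpace ℂ (Fin n)) : EuclideanSpace ℂ (Fin n) :=
  Complex.I • x

/-- The real inner product `⟨x, y⟩ = Re ⟪x, y⟫` on `ℂⁿ`. -/
noncomputable def rinner {n : ℕ} (x y : EuclideanSpace ℂ (Fin n)) : ℝ :=
  (inner ℂ x y : ℂ).re

/-- Partial derivative in the real coordinate direction for a map on `ℂ ≅ ℝ²`. -/
noncomputable def pd1 {E : Type*} [NormedAddCommGroup E] [NormedSpace ℝ E]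
    (f : ℂ → E) (w : ℂ) : E :=
  fderiv ℝ f w 1

/-- Partial derivative in the imaginary coordinate direction for a map on `ℂ ≅ ℝ²`. -/
noncomputable def pd2 {E : Type*} [NormedAddCommGroup E] [NormedSpace ℝ E]
    (f : ℂ → E) (w : ℂ) : E :=
  fderiv ℝ f w Complex.I


/-! The function `g = ⟨J u, ∂₁u⟩ - i ⟨J u, ∂₂u⟩` vanishes exactly at the Legendrian points.
Differentiating, the terms `⟨J ∂ₖu, ∂ₖu⟩` drop out, so `∂₁ Re g - ∂₂ Im g = ⟨J u, Δu⟩`, and by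
symmetry of the second derivative `∂₂ Re g + ∂₁ Im g = -2 ⟨J ∂₁u, ∂₂u⟩`. Thus the Cauchy–Riemann
equations for `g` are precisely Hamiltonian stationarity and isotropy: `g` is holomorphic on `O`,
and the identity theorem says its zeros either fill the connected set `O` or are isolated. -/

open Filter Topology

lemma fderiv_clm_apply_const {𝕜 E F G : Type*} [NontriviallyNormedField 𝕜]
    [NormedAddCommGroup E] [NormedSpace 𝕜 E] [NormedAddCommGroup F] [NormedSpace 𝕜 F]
    [NormedAddCommGroup G] [NormedSpace 𝕜 G] {c : E → F →L[𝕜] G} {x : E}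
    (hc : DifferentiableAt 𝕜 c x) (h : E) (w : F) :
    fderiv 𝕜 (fun y => c y w) x h = fderiv 𝕜 c x h w := by
  simp [fderiv_clm_apply hc (differentiableAt_const w)]

lemma ContinuousLinearMap.ext_one_I {F : Type*} [NormedAddCommGroup F] [NormedSpace ℝ F]
    {f g : ℂ →L[ℝ] F} (h1 : f 1 = g 1) (hI : f Complex.I = g Complex.I) : f = g :=
  ContinuousLinearMap.coe_injective (Complex.basisOneI.ext fun i => by fin_cases i <;> simpa)

theorem differentiableAt_complex_of_pd2_eq_I_smul_pd1 {F : Type*} [NormedAddCommGroup F]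
    [NormedSpace ℂ F] {f : ℂ → F} {w : ℂ} (hf : DifferentiableAt ℝ f w)
    (hCR : pd2 f w = Complex.I • pd1 f w) : DifferentiableAt ℂ f w := by
  refine (differentiableAt_iff_restrictScalars ℝ hf).2
    ⟨ContinuousLinearMap.smulRight (1 : ℂ →L[ℂ] ℂ) (pd1 f w), ContinuousLinearMap.ext_one_I ?_ ?_⟩
  · simp [pd1]
  · simpa [pd1, pd2] using hCR.symm

theorem differentiableAt_complex_mk_of_cauchyRiemann {a b : ℂ → ℝ} {w : ℂ}
    (ha : DifferentiableAt ℝ a w) (hb : DifferentiableAt ℝ b w)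
    (h₁ : pd1 a w = pd2 b w) (h₂ : pd2 a w = -pd1 b w) :
    DifferentiableAt ℂ (fun z => (⟨a z, b z⟩ : ℂ)) w := by
  have hd : HasFDerivAt (fun z => (⟨a z, b z⟩ : ℂ))
      (Complex.equivRealProdCLM.symm.toContinuousLinearMap.comp
        ((fderiv ℝ a w).prod (fderiv ℝ b w))) w :=
    Complex.equivRealProdCLM.symm.hasFDerivAt.comp w (ha.hasFDerivAt.prodMk hb.hasFDerivAt)
  refine differentiableAt_complex_of_pd2_eq_I_smul_pd1 hd.differentiableAt ?_
  simp only [pd1, pd2, hd.fderiv] at h₁ h₂ ⊢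
  apply Complex.ext <;> simp [h₁, h₂]

theorem AnalyticOnNhd.zeros_eq_or_isolated {𝕜 E : Type*} [NontriviallyNormedField 𝕜]
    [NormedAddCommGroup E] [NormedSpace 𝕜 E] {f : 𝕜 → E} {U : Set 𝕜}
    (hf : AnalyticOnNhd 𝕜 f U) (hU : IsPreconnected U) :
    {z ∈ U | f z = 0} = U ∨
      ∀ w ∈ {z ∈ U | f z = 0}, ∃ ε > 0, ∀ z ∈ {z ∈ U | f z = 0}, dist z w < ε → z = w := by
  by_cases hacc : ∃ w ∈ U, ∃ᶠ z in 𝓝[≠] w, f z = 0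
  · obtain ⟨w, hw, hfreq⟩ := hacc
    have hzero := hf.eqOn_zero_of_preconnected_of_frequently_eq_zero hU hw hfreq
    exact Or.inl (Set.sep_eq_self_iff_mem_true.2 hzero)
  · push Not at hacc
    right
    rintro w ⟨hw, -⟩
    obtain ⟨ε, hε, hball⟩ := Metric.eventually_nhds_iff.1 (eventually_nhdsWithin_iff.1 (hacc w hw))
    exact ⟨ε, hε, fun z hz hzw => by_contra fun hne => hball hzw hne hz.2⟩

lemma rinner_Jc_eq_im {n : ℕ} (x y : EuclideanSpace ℂ (Fin n)) :
    rinner (Jc x) y = (inner ℂ x y).im := by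
  simp [rinner, Jc]

lemma rinner_add_right {n : ℕ} (x y z : EuclideanSpace ℂ (Fin n)) :
    rinner x (y + z) = rinner x y + rinner x z := by
  simp [rinner]

lemma rinner_Jc_comm {n : ℕ} (x y : EuclideanSpace ℂ (Fin n)) :
    rinner (Jc x) y = -rinner (Jc y) x := by
  rw [rinner_Jc_eq_im, rinner_Jc_eq_im, ← inner_conj_symm x y, Complex.conj_im]

lemma rinner_Jc_self {n : ℕ} (x : EuclideanSpace ℂ (Fin n)) : rinner (Jc x) x = 0 := by
  have := rinner_Jc_comm x x; linarith

lemma fderiv_rinner_Jc_apply {n : ℕ} {G : Type*} [NormedAddCommGroup G] [NormedSpace ℝ G]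
    {f g : G → EuclideanSpace ℂ (Fin n)} {x : G} (hf : DifferentiableAt ℝ f x)
    (hg : DifferentiableAt ℝ g x) (v : G) :
    fderiv ℝ (fun y => rinner (Jc (f y)) (g y)) x v =
      rinner (Jc (fderiv ℝ f x v)) (g x) + rinner (Jc (f x)) (fderiv ℝ g x v) := by
  simp only [rinner_Jc_eq_im]
  have hd : HasFDerivAt (fun y => (inner ℂ (f y) (g y)).im) _ x :=
    Complex.imCLM.hasFDerivAt.comp x (hf.hasFDerivAt.inner ℂ hg.hasFDerivAt)
  simp [hd.fderiv, add_comm]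

lemma differentiableAt_rinner_Jc {n : ℕ} {G : Type*} [NormedAddCommGroup G] [NormedSpace ℝ G]
    {f g : G → EuclideanSpace ℂ (Fin n)} {x : G} (hf : DifferentiableAt ℝ f x)
    (hg : DifferentiableAt ℝ g x) :
    DifferentiableAt ℝ (fun y => rinner (Jc (f y)) (g y)) x := by
  simp only [rinner_Jc_eq_im]
  exact (Complex.imCLM.hasFDerivAt.comp x (hf.hasFDerivAt.inner ℂ hg.hasFDerivAt)).differentiableAt

lemma fderiv_rinner_Jc_fderiv_apply {n : ℕ} {G : Type*} [NormedAddCommGroup G] [NormedSpace ℝ G]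
    {u : G → EuclideanSpace ℂ (Fin n)} {w : G} (hu : ContDiffAt ℝ 2 u w) (v h : G) :
    fderiv ℝ (fun x => rinner (Jc (u x)) (fderiv ℝ u x v)) w h =
      rinner (Jc (fderiv ℝ u w h)) (fderiv ℝ u w v) +
        rinner (Jc (u w)) (fderiv ℝ (fderiv ℝ u) w h v) := by
  have hu' : DifferentiableAt ℝ (fderiv ℝ u) w :=
    (hu.fderiv_right (m := 1) le_rfl).differentiableAt one_ne_zero
  rw [fderiv_rinner_Jc_apply (hu.differentiableAt two_ne_zero)
    (hu'.clm_apply (differentiableAt_const v)), fderiv_clm_apply_const hu']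

noncomputable def legendrianDefect {n : ℕ} (u : ℂ → EuclideanSpace ℂ (Fin n)) (w : ℂ) : ℂ :=
  ⟨rinner (Jc (u w)) (pd1 u w), -rinner (Jc (u w)) (pd2 u w)⟩

lemma legendrianDefect_eq_zero_iff {n : ℕ} {u : ℂ → EuclideanSpace ℂ (Fin n)} {w : ℂ} :
    legendrianDefect u w = 0 ↔
      rinner (Jc (u w)) (pd1 u w) = 0 ∧ rinner (Jc (u w)) (pd2 u w) = 0 := by
  simp [legendrianDefect, Complex.ext_iff]

theorem differentiableAt_legendrianDefect {n : ℕ} {u : ℂ → EuclideanSpace ℂ (Fin n)} {w : ℂ}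
    (hu : ContDiffAt ℝ 2 u w) (hiso : rinner (Jc (pd1 u w)) (pd2 u w) = 0)
    (hHS : rinner (Jc (u w)) (pd1 (pd1 u) w + pd2 (pd2 u) w) = 0) :
    DifferentiableAt ℂ (legendrianDefect u) w := by
  have hu' : DifferentiableAt ℝ (fderiv ℝ u) w :=
    (hu.fderiv_right (m := 1) le_rfl).differentiableAt one_ne_zero
  have hsymm := (hu.isSymmSndFDerivAt (by simp)).eq
  have hpd : ∀ v, DifferentiableAt ℝ (fun x => rinner (Jc (u x)) (fderiv ℝ u x v)) w := fun v =>
    differentiableAt_rinner_Jc (hu.differentiableAt two_ne_zero)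
      (hu'.clm_apply (differentiableAt_const v))
  rw [rinner_add_right] at hHS
  unfold pd1 pd2 at hiso hHS
  simp only [fderiv_clm_apply_const hu'] at hHS
  refine differentiableAt_complex_mk_of_cauchyRiemann (hpd 1) (hpd Complex.I).neg ?_ ?_
  · simp only [pd1, pd2, fderiv_fun_neg, neg_apply,
      fderiv_rinner_Jc_fderiv_apply hu, rinner_Jc_self]
    linarith
  · simp only [pd1, pd2, fderiv_fun_neg, neg_apply,
      fderiv_rinner_Jc_fderiv_apply hu, hsymm 1 Complex.I,
      rinner_Jc_comm (fderiv ℝ u w Complex.I)]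
    linarith

theorem legendrian_points_dichotomy_general (n : ℕ)
    (O : Set ℂ) (hO : IsOpen O) (hconn : IsConnected O)
    (u : ℂ → EuclideanSpace ℂ (Fin n))
    (hu : ContDiffOn ℝ 2 u O)
    (hiso : ∀ w ∈ O, rinner (Jc (pd1 u w)) (pd2 u w) = 0)
    (hHS : ∀ w ∈ O, rinner (Jc (u w)) (pd1 (pd1 u) w + pd2 (pd2 u) w) = 0)
    (Z : Set ℂ)
    (hZ : Z = {w ∈ O | rinner (Jc (u w)) (pd1 u w) = 0 ∧ rinner (Jc (u w)) (pd2 u w) = 0}) :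
    Z = O ∨ ∀ w ∈ Z, ∃ ε > 0, ∀ z ∈ Z, dist z w < ε → z = w := by
  have hZ' : Z = {w ∈ O | legendrianDefect u w = 0} := by
    simp only [hZ, legendrianDefect_eq_zero_iff]
  have hdiff : DifferentiableOn ℂ (legendrianDefect u) O := fun w hw =>
    (differentiableAt_legendrianDefect (hu.contDiffAt (hO.mem_nhds hw)) (hiso w hw)
      (hHS w hw)).differentiableWithinAt
  rw [hZ']
  exact (hdiff.analyticOnNhd hO).zeros_eq_or_isolated hconn.isPreconnected

/-- For a `C²` isotropic map `u : ℂ → ℂⁿ` on an open connected set `O` whose cone is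
Hamiltonian stationary, the set `Z` of Legendrian points is either all of `O` or consists
only of isolated points. -/
theorem legendrian_points_dichotomy (n : ℕ) (hn : 1 ≤ n)
    (O : Set ℂ) (hO : IsOpen O) (hconn : IsConnected O)
    (u : ℂ → EuclideanSpace ℂ (Fin n))
    (hu : ContDiffOn ℝ 2 u O)
    (hiso : ∀ w ∈ O, rinner (Jc (pd1 u w)) (pd2 u w) = 0)
    (hHS : ∀ w ∈ O, rinner (Jc (u w)) (pd1 (pd1 u) w + pd2 (pd2 u) w) = 0)
    (Z : Set ℂ)
    (hZ : Z = {w ∈ O | rinner (Jc (u w)) (pd1 u w) = 0 ∧ rinner (Jc (u w)) (pd2 u w) = 0}) :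
    Z = O ∨ ∀ w ∈ Z, ∃ ε > 0, ∀ z ∈ Z, dist z w < ε → z = w :=
  legendrian_points_dichotomy_general n O hO hconn u hu hiso hHS Z hZ
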